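/- arXiv:2303.02493 — 3 statements merged into one kernel-verified Lean document; each statement's English description precedes it below -/
import Mathlib

section
/- Let n be a positive integer with prime factorization having prime-power parts n_r = r^{e_r}, let p be an integer coprime to n, and for each prime r dividing n let d_r be the multiplicative order of p modulo n_r. Then -1 is a power of p in (ℤ/nℤ)* if and only if: the orders d_r for all odd primes r dividing n have the same 2-adic valuation k ≥ 1; p ≡ -1 (mod n_2) whenever 2 divides n; and k = 1 whenever 4 divides n. -/
lemma aux_pow_eq_neg_one_iff (q : ℕ) (p : ℤ) (m : ℕ) :
    (p : ZMod q) ^ m = -1 ↔ ((q : ℕ) : ℤ) ∣ p ^ m + 1 := by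
  rw [← ZMod.intCast_zmod_eq_zero_iff_dvd]
  push_cast
  constructor
  · intro h; rw [h]; ring
  · intro h; linear_combination h

lemma aux_int_dvd_iff (N : ℕ) (hN : N ≠ 0) (x : ℤ) :
    ((N : ℕ) : ℤ) ∣ x ↔ ∀ r ∈ N.primeFactors, ((r ^ N.factorization r : ℕ) : ℤ) ∣ x := by
  constructor
  · intro h r _
    exact dvd_trans (Int.natCast_dvd_natCast.mpr (Nat.ordProj_dvd N r)) h
  · intro h
    rcases eq_or_ne x 0 with rfl | hx
    · exact dvd_zero _
    rw [Int.natCast_dvd]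
    have hxa : x.natAbs ≠ 0 := Int.natAbs_ne_zero.mpr hx
    rw [← Nat.factorization_le_iff_dvd hN hxa, Finsupp.le_def]
    intro q
    by_cases hq : q ∈ N.primeFactors
    · have hqp : q.Prime := Nat.prime_of_mem_primeFactors hq
      have h' := h q hq
      rw [Int.natCast_dvd] at h'
      exact (Nat.Prime.pow_dvd_iff_le_factorization hqp hxa).mp h'
    · have : N.factorization q = 0 := by
        rwa [← Finsupp.notMem_support_iff, Nat.support_factorization]
      omega

lemma aux_isUnit_cast {q : ℕ} {p : ℤ} (h : IsCoprime p (q : ℤ)) : IsUnit (p : ZMod q) := by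
  obtain ⟨a, b, hab⟩ := h
  have := congrArg (Int.cast : ℤ → ZMod q) hab
  push_cast at this
  rw [ZMod.natCast_self, mul_zero, add_zero] at this
  exact IsUnit.of_mul_eq_one _ (by rw [mul_comm]; exact this)

lemma aux_orderOf_ne_zero {q : ℕ} [NeZero q] {x : ZMod q} (h : IsUnit x) : orderOf x ≠ 0 := by
  obtain ⟨u, rfl⟩ := h
  rw [orderOf_units]
  exact (orderOf_pos u).ne'

lemma aux_sq_cases {r e : ℕ} (hr : r.Prime) (hr2 : r ≠ 2) (he : e ≠ 0) {x : ZMod (r ^ e)}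
    (hx : x ^ 2 = 1) : x = 1 ∨ x = -1 := by
  haveI : NeZero (r ^ e) := ⟨pow_ne_zero _ hr.pos.ne'⟩
  set a : ℤ := (x.val : ℤ) with ha
  have hxa : ((a : ℤ) : ZMod (r ^ e)) = x := by
    rw [ha, Int.cast_natCast, ZMod.natCast_val, ZMod.cast_id]
  have hrz : Prime (r : ℤ) := Nat.prime_iff_prime_int.mp hr
  have hdvd : ((r : ℤ)) ^ e ∣ (a - 1) * (a + 1) := by
    have h0 : (((r ^ e : ℕ) : ℤ)) ∣ (a - 1) * (a + 1) := by
      rw [← ZMod.intCast_zmod_eq_zero_iff_dvd]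
      push_cast
      rw [hxa]
      linear_combination hx
    exact_mod_cast h0
  have hno : ¬ ((r : ℤ) ∣ a - 1 ∧ (r : ℤ) ∣ a + 1) := by
    rintro ⟨h1, h2⟩
    have h3 : (r : ℤ) ∣ 2 := by simpa using dvd_sub h2 h1
    rw [show ((2 : ℤ)) = ((2 : ℕ) : ℤ) by norm_num, Int.natCast_dvd_natCast] at h3
    have := (Nat.prime_dvd_prime_iff_eq hr Nat.prime_two).mp h3
    exact hr2 this
  have conv1 : ∀ b : ℤ, (r : ℤ) ^ e ∣ a - b → x = (b : ZMod (r ^ e)) := by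
    intro b hb
    have : (((r ^ e : ℕ) : ℤ)) ∣ a - b := by exact_mod_cast hb
    rw [← ZMod.intCast_zmod_eq_zero_iff_dvd] at this
    push_cast at this
    rw [hxa, sub_eq_zero] at this
    exact this
  by_cases h1 : (r : ℤ) ∣ a - 1
  · left
    have hnd : ¬ (r : ℤ) ∣ a + 1 := fun h' => hno ⟨h1, h'⟩
    have hcop : IsCoprime ((r : ℤ) ^ e) (a + 1) :=
      IsCoprime.pow_left ((hrz.coprime_iff_not_dvd).mpr hnd)
    have h3 : (r : ℤ) ^ e ∣ a - 1 := hcop.dvd_of_dvd_mul_right hdvd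
    simpa using conv1 1 h3
  · right
    have hcop : IsCoprime ((r : ℤ) ^ e) (a - 1) :=
      IsCoprime.pow_left ((hrz.coprime_iff_not_dvd).mpr h1)
    have h3 : (r : ℤ) ^ e ∣ a + 1 := hcop.dvd_of_dvd_mul_left hdvd
    simpa using conv1 (-1) (by rw [sub_neg_eq_add]; exact h3)

lemma aux_val2 {d m : ℕ} (h2 : d ∣ 2 * m) (h1 : ¬ d ∣ m) :
    d.factorization 2 = m.factorization 2 + 1 := by
  have hm : m ≠ 0 := by rintro rfl; exact h1 (dvd_zero d)
  have hd : d ≠ 0 := by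
    rintro rfl
    have := zero_dvd_iff.mp h2
    exact h1 (by omega)
  have h2m : 2 * m ≠ 0 := by omega
  have hle := (Nat.factorization_le_iff_dvd hd h2m).mpr h2
  rw [Nat.factorization_mul two_ne_zero hm, Nat.Prime.factorization Nat.prime_two] at hle
  rw [Finsupp.le_def] at hle
  have key : ∀ q, q ≠ 2 → d.factorization q ≤ m.factorization q := by
    intro q hq
    have := hle q
    simpa [Finsupp.single_apply, Ne.symm hq] using this
  have h2' : d.factorization 2 ≤ m.factorization 2 + 1 := by
    have := hle 2
    simpa [Finsupp.single_apply, add_comm] using this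
  by_contra hne
  have hlt : d.factorization 2 ≤ m.factorization 2 := by omega
  apply h1
  rw [← Nat.factorization_le_iff_dvd hd hm, Finsupp.le_def]
  intro q
  by_cases hq : q = 2
  · subst hq; exact hlt
  · exact key q hq

lemma aux_unit_neg_one {e m : ℕ} (he : 1 ≤ e) (hm : Odd m) {x : ZMod (2 ^ e)} (hx : IsUnit x)
    (h : x ^ m = -1) : x = -1 := by
  haveI : NeZero (2 ^ e) := ⟨pow_ne_zero _ two_ne_zero⟩
  obtain ⟨u, rfl⟩ := hx
  have hneg : (-u) ^ m = 1 := by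
    apply Units.ext
    push_cast
    rw [hm.neg_pow, h, neg_neg]
  have h1 : orderOf (-u) ∣ m := orderOf_dvd_of_pow_eq_one hneg
  have h2 : orderOf (-u) ∣ 2 ^ (e - 1) := by
    have hc := orderOf_dvd_card (x := -u)
    rwa [ZMod.card_units_eq_totient, Nat.totient_prime_pow Nat.prime_two (by omega),
      show (2 - 1 : ℕ) = 1 by norm_num, mul_one] at hc
  have hco : Nat.Coprime (2 ^ (e - 1)) m :=
    Nat.Coprime.pow_left _ (Nat.coprime_two_left.mpr hm)
  have hord : orderOf (-u) = 1 :=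
    Nat.eq_one_of_dvd_coprimes hco h2 h1
  have : -u = 1 := orderOf_eq_one_iff.mp hord
  have hu : u = -1 := by rw [← neg_neg u, this]
  rw [hu]
  simp

lemma aux_odd_exp {p : ℤ} (hp2 : ¬ (2 : ℤ) ∣ p) {m : ℕ} (h : (4 : ℤ) ∣ p ^ m + 1) : Odd m := by
  rw [← Nat.not_even_iff_odd]
  intro hev
  obtain ⟨s, rfl⟩ := hev
  have hodd : ¬ (2 : ℤ) ∣ p ^ s := fun hdd => hp2 (Int.prime_two.dvd_of_dvd_pow hdd)
  obtain ⟨t, ht⟩ : Odd (p ^ s) := Int.not_even_iff_odd.mp (fun ⟨c, hc⟩ => hodd ⟨c, by omega⟩)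
  have h4 : (4 : ℤ) ∣ p ^ (s + s) - 1 := by
    refine ⟨t ^ 2 + t, ?_⟩
    have : p ^ (s + s) = (p ^ s) ^ 2 := by rw [← pow_mul]; ring_nf
    rw [this, ht]; ring
  have : (4 : ℤ) ∣ 2 := by
    have := dvd_sub h h4
    simpa using this
  norm_num at this

lemma aux_two_adic_forward {e m : ℕ} (he : 1 ≤ e) {p : ℤ} (hp2 : ¬ (2 : ℤ) ∣ p)
    (hu : IsUnit ((p : ZMod (2 ^ e)))) (h : (p : ZMod (2 ^ e)) ^ m = -1) :
    (p : ZMod (2 ^ e)) = -1 := by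
  rcases eq_or_lt_of_le he with he1 | he2
  · have h0 : (p : ZMod (2 ^ e)) ≠ 0 := by
      rw [Ne, ZMod.intCast_zmod_eq_zero_iff_dvd]
      intro hc
      apply hp2
      refine dvd_trans ?_ hc
      rw [← he1]
      norm_num
    rw [← he1] at h0 ⊢
    have hall : ∀ x : ZMod (2 ^ 1), x ≠ 0 → x = -1 := by decide
    exact hall _ h0
  · have hdvd : ((2 : ℤ)) ^ e ∣ p ^ m + 1 := by
      have := (aux_pow_eq_neg_one_iff (2 ^ e) p m).mp h
      exact_mod_cast this
    have h4 : (4 : ℤ) ∣ p ^ m + 1 := by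
      refine dvd_trans ?_ hdvd
      have h42 : (4 : ℤ) = 2 ^ 2 := by norm_num
      rw [h42]
      exact pow_dvd_pow 2 he2
    exact aux_unit_neg_one he (aux_odd_exp hp2 h4) hu h

/-- Let `n` be a positive integer with prime-power parts `n_r = r^{e_r}`, let `p` be an
integer coprime to `n`, and for each prime `r ∣ n` let `d_r` be the multiplicative order
of `p` modulo `n_r`. Then `-1` is a power of `p` in `(ℤ/nℤ)*` if and only if: the orders
`d_r` for all odd primes `r ∣ n` have the same `2`-adic valuation `k ≥ 1`; `p ≡ -1 (mod n_2)`
whenever `2 ∣ n`; and `k = 1` whenever `4 ∣ n`. -/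
theorem neg_one_is_power_iff (n : ℕ) (hn : 0 < n) (p : ℤ) (hp : Int.gcd p n = 1) :
    (∃ m : ℕ, ((p : ZMod n)) ^ m = -1) ↔
    ∃ k : ℕ, 1 ≤ k ∧
      (∀ r : ℕ, r.Prime → r ∣ n → Odd r →
        (orderOf ((p : ZMod (r ^ (n.factorization r))))).factorization 2 = k) ∧
      (2 ∣ n → ((p : ZMod (2 ^ (n.factorization 2))) = -1)) ∧
      (4 ∣ n → k = 1) := by
  have hn0 : n ≠ 0 := hn.ne'
  have hcop : IsCoprime p (n : ℤ) := Int.isCoprime_iff_gcd_eq_one.mpr hp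
  have hqcop : ∀ r : ℕ, IsCoprime p ((r ^ n.factorization r : ℕ) : ℤ) := by
    intro r
    refine hcop.of_isCoprime_of_dvd_right ?_
    exact_mod_cast Int.natCast_dvd_natCast.mpr (Nat.ordProj_dvd n r)
  have hp2 : 2 ∣ n → ¬ (2 : ℤ) ∣ p := by
    intro h2n hdp
    have h2int : (2 : ℤ) ∣ (n : ℤ) := by exact_mod_cast h2n
    have := IsCoprime.isUnit_of_dvd' hcop hdp h2int
    rw [Int.isUnit_iff] at this
    omega
  have key : ∀ m : ℕ, ((p : ZMod n) ^ m = -1) ↔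
      ∀ r ∈ n.primeFactors, (p : ZMod (r ^ n.factorization r)) ^ m = -1 := by
    intro m
    rw [aux_pow_eq_neg_one_iff, aux_int_dvd_iff n hn0]
    exact forall₂_congr fun r hr => (aux_pow_eq_neg_one_iff _ p m).symm
  constructor
  · rintro ⟨m, hm⟩
    have hall := (key m).mp hm
    have hmodd : 4 ∣ n → Odd m := by
      intro h4n
      have h2n : 2 ∣ n := dvd_trans ⟨2, rfl⟩ h4n
      have h2mem : 2 ∈ n.primeFactors := Nat.mem_primeFactors.mpr ⟨Nat.prime_two, h2n, hn0⟩
      have h := hall 2 h2mem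
      rw [aux_pow_eq_neg_one_iff] at h
      have he2 : 2 ≤ n.factorization 2 :=
        (Nat.Prime.pow_dvd_iff_le_factorization Nat.prime_two hn0).mp (by norm_num at h4n ⊢; exact h4n)
      apply aux_odd_exp (hp2 h2n)
      refine dvd_trans ?_ h
      push_cast
      calc (4 : ℤ) = 2 ^ 2 := by norm_num
        _ ∣ 2 ^ n.factorization 2 := pow_dvd_pow 2 he2
    refine ⟨m.factorization 2 + 1, Nat.le_add_left 1 _, ?_, ?_, ?_⟩
    · intro r hrp hrdvd hrodd
      have hrmem : r ∈ n.primeFactors := Nat.mem_primeFactors.mpr ⟨hrp, hrdvd, hn0⟩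
      have h := hall r hrmem
      have hfr : n.factorization r ≠ 0 := (Nat.Prime.factorization_pos_of_dvd hrp hn0 hrdvd).ne'
      have hr2 : r ≠ 2 := by rintro rfl; rw [Nat.odd_iff] at hrodd; omega
      haveI : NeZero (r ^ n.factorization r) := ⟨pow_ne_zero _ hrp.pos.ne'⟩
      haveI : Fact (2 < r ^ n.factorization r) := ⟨by
        have h3r : 3 ≤ r := by have := hrp.two_le; omega
        calc 2 < r := by omega
          _ ≤ r ^ n.factorization r := Nat.le_self_pow hfr r⟩
      have hne : (-1 : ZMod (r ^ n.factorization r)) ≠ 1 := ZMod.neg_one_ne_one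
      have h2m : orderOf ((p : ZMod (r ^ n.factorization r))) ∣ 2 * m := by
        apply orderOf_dvd_of_pow_eq_one
        rw [mul_comm, pow_mul, h]
        exact neg_one_sq
      have h1m : ¬ orderOf ((p : ZMod (r ^ n.factorization r))) ∣ m := by
        intro hdd
        have h1 := orderOf_dvd_iff_pow_eq_one.mp hdd
        rw [h] at h1
        exact hne h1
      exact aux_val2 h2m h1m
    · intro h2n
      have h2mem : 2 ∈ n.primeFactors := Nat.mem_primeFactors.mpr ⟨Nat.prime_two, h2n, hn0⟩
      have h := hall 2 h2mem
      have he1 : 1 ≤ n.factorization 2 := Nat.Prime.factorization_pos_of_dvd Nat.prime_two hn0 h2n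
      exact aux_two_adic_forward he1 (hp2 h2n) (aux_isUnit_cast (hqcop 2)) h
    · intro h4n
      have hodd := hmodd h4n
      have hz : m.factorization 2 = 0 :=
        Nat.factorization_eq_zero_of_not_dvd (by rw [Nat.odd_iff] at hodd; omega)
      omega
  · rintro ⟨k, hk1, hvals, h2, h4⟩
    classical
    set S := n.primeFactors.erase 2 with hS
    set g : ℕ → ℕ := fun r => ordCompl[2] (orderOf ((p : ZMod (r ^ n.factorization r)))) with hg
    set P := ∏ r ∈ S, g r with hP
    have hgodd : ∀ r ∈ S, Odd (g r) := by
      intro r hrS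
      have hrmem := Finset.mem_of_mem_erase hrS
      have hrp := Nat.prime_of_mem_primeFactors hrmem
      haveI : NeZero (r ^ n.factorization r) := ⟨pow_ne_zero _ hrp.pos.ne'⟩
      have hd0 : orderOf ((p : ZMod (r ^ n.factorization r))) ≠ 0 :=
        aux_orderOf_ne_zero (aux_isUnit_cast (hqcop r))
      have hnd := Nat.not_dvd_ordCompl Nat.prime_two hd0
      rw [Nat.odd_iff]
      simp only [hg]
      omega
    have hPodd : Odd P := Finset.prod_induction g Odd (fun _ _ => Odd.mul) odd_one hgodd
    have hP0 : P ≠ 0 := by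
      obtain ⟨c, hc⟩ := hPodd
      omega
    refine ⟨2 ^ (k - 1) * P, (key _).mpr ?_⟩
    intro r hrmem
    have hrp := Nat.prime_of_mem_primeFactors hrmem
    have hrdvd := Nat.dvd_of_mem_primeFactors hrmem
    have hfr : n.factorization r ≠ 0 := (Nat.Prime.factorization_pos_of_dvd hrp hn0 hrdvd).ne'
    haveI : NeZero (r ^ n.factorization r) := ⟨pow_ne_zero _ hrp.pos.ne'⟩
    by_cases hr2 : r = 2
    · subst hr2
      rw [h2 hrdvd]
      rcases eq_or_lt_of_le (Nat.one_le_iff_ne_zero.mpr hfr) with he1 | he2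
      · rw [← he1]
        have hone : (-1 : ZMod (2 ^ 1)) = 1 := by decide
        rw [hone, one_pow]
      · have hk : k = 1 := by
          apply h4
          have h22 : (2 : ℕ) ^ 2 ∣ 2 ^ n.factorization 2 := pow_dvd_pow 2 he2
          have := dvd_trans h22 (Nat.ordProj_dvd n 2)
          norm_num at this
          exact this
        rw [hk]
        norm_num
        exact hPodd.neg_one_pow
    · have hrodd : Odd r := hrp.odd_of_ne_two hr2
      have hrS : r ∈ S := Finset.mem_erase.mpr ⟨hr2, hrmem⟩
      have hk := hvals r hrp hrdvd hrodd
      have hu : IsUnit ((p : ZMod (r ^ n.factorization r))) := aux_isUnit_cast (hqcop r)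
      have hd0 : orderOf ((p : ZMod (r ^ n.factorization r))) ≠ 0 := aux_orderOf_ne_zero hu
      have hgdvd : g r ∣ P := Finset.dvd_prod_of_mem g hrS
      have hdecomp : orderOf ((p : ZMod (r ^ n.factorization r))) = 2 ^ k * g r := by
        simp only [hg]
        rw [← hk]
        exact (Nat.ordProj_mul_ordCompl_eq_self _ 2).symm
      have hdvd2m : orderOf ((p : ZMod (r ^ n.factorization r))) ∣ 2 * (2 ^ (k - 1) * P) := by
        have h2k : 2 * 2 ^ (k - 1) = 2 ^ k := by
          rw [← pow_succ']
          congr 1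
          omega
        calc orderOf ((p : ZMod (r ^ n.factorization r))) = 2 ^ k * g r := hdecomp
          _ ∣ 2 ^ k * P := mul_dvd_mul_left _ hgdvd
          _ = 2 * (2 ^ (k - 1) * P) := by rw [← mul_assoc, h2k]
      have hndvd : ¬ orderOf ((p : ZMod (r ^ n.factorization r))) ∣ 2 ^ (k - 1) * P := by
        intro hdd
        have hm0 : 2 ^ (k - 1) * P ≠ 0 := mul_ne_zero (pow_ne_zero _ two_ne_zero) hP0
        have hle := (Nat.factorization_le_iff_dvd hd0 hm0).mpr hdd
        rw [Finsupp.le_def] at hle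
        have h2' := hle 2
        rw [hk, Nat.factorization_mul (pow_ne_zero _ two_ne_zero) hP0,
          Nat.factorization_pow] at h2'
        have hPz : P.factorization 2 = 0 :=
          Nat.factorization_eq_zero_of_not_dvd (by rw [Nat.odd_iff] at hPodd; omega)
        simp [Nat.Prime.factorization Nat.prime_two, hPz, Finsupp.single_apply] at h2'
        omega
      have hpow1 : ((p : ZMod (r ^ n.factorization r)) ^ (2 ^ (k - 1) * P)) ^ 2 = 1 := by
        rw [← pow_mul, mul_comm]
        exact orderOf_dvd_iff_pow_eq_one.mp hdvd2m
      rcases aux_sq_cases hrp hr2 hfr hpow1 with h1 | h1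
      · exact absurd (orderOf_dvd_of_pow_eq_one h1) hndvd
      · exact h1
end

section
/- Let q = 2^e with e ≥ 2. The centralizer in SL₂(F_q) of any involution is an elementary abelian 2-group of order q. -/
/-!
In characteristic two an involution `A` is unipotent: `N = A - 1` is a nonzero matrix with
`N * N = 0`. A nonzero square-zero endomorphism `f` of a plane has a cyclic vector `v`
(`v, f v` is a basis), so everything commuting with `N` has the form `a • 1 + b • N`, whose
determinant is `a ^ 2`. Since squaring is injective in characteristic two, the centralizer of `A`
in `SL₂` is exactly the image of the injective homomorphism `t ↦ 1 + t • N` from the additive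
group of the field.
-/

open Matrix

namespace Module.End

variable {K V : Type*} [Field K] [AddCommGroup V] [Module K V]

theorem linearIndependent_pair_of_mul_self_eq_zero {f : Module.End K V} (hf : f * f = 0)
    {v : V} (hv : f v ≠ 0) : LinearIndependent K ![v, f v] := by
  refine LinearIndependent.pair_iff.mpr fun s t hst => ?_
  have hs : s = 0 := by
    have := congrArg f hst
    rw [map_add, map_smul, map_smul, ← mul_apply, hf, LinearMap.zero_apply, smul_zero, add_zero,
      map_zero] at this
    exact (smul_eq_zero.mp this).resolve_right hv
  subst hs
  simpa [hv] using hst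

theorem exists_eq_smul_one_add_smul_of_commute (hV : Module.finrank K V = 2)
    {f g : Module.End K V} (hf : f * f = 0) (hf0 : f ≠ 0) (hgf : Commute g f) :
    ∃ a b : K, g = a • 1 + b • f := by
  obtain ⟨v, hv⟩ : ∃ v, f v ≠ 0 := by
    by_contra! h
    exact hf0 (LinearMap.ext h)
  have hli := linearIndependent_pair_of_mul_self_eq_zero hf hv
  have hcard : Fintype.card (Fin 2) = Module.finrank K V := by simp [hV]
  obtain ⟨c, hc⟩ := (Submodule.mem_span_range_iff_exists_fun K).mp
    ((hli.span_eq_top_of_card_eq_finrank hcard).symm ▸ Submodule.mem_top : g v ∈ _)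
  rw [Fin.sum_univ_two] at hc
  refine ⟨c 0, c 1, (basisOfLinearIndependentOfCardEqFinrank hli hcard).ext fun i => ?_⟩
  have hgfv : g (f v) = c 0 • f v := by
    rw [← mul_apply, hgf.eq, mul_apply, ← hc]
    simp [← mul_apply, hf]
  fin_cases i
  · simp [← hc]
  · simp [hgfv, ← mul_apply, hf]

end Module.End

namespace Matrix

theorem exists_eq_smul_one_add_smul_of_commute {K : Type*} [Field K]
    {N B : Matrix (Fin 2) (Fin 2) K} (hN : N * N = 0) (hN0 : N ≠ 0) (hBN : Commute B N) :
    ∃ a b : K, B = a • 1 + b • N := by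
  obtain ⟨a, b, h⟩ := Module.End.exists_eq_smul_one_add_smul_of_commute
    (Module.finrank_fin_fun K) (f := toLinAlgEquiv' N) (g := toLinAlgEquiv' B)
    (by rw [← map_mul, hN, map_zero]) (by simpa using hN0) (hBN.map _)
  exact ⟨a, b, toLinAlgEquiv'.injective (by simpa using h)⟩

variable {R : Type*} [CommRing R] [IsDomain R] {N : Matrix (Fin 2) (Fin 2) R}

theorem det_smul_one_add_smul_of_mul_self_eq_zero (hN : N * N = 0) (a b : R) :
    (a • 1 + b • N).det = a ^ 2 := by
  have htr : N.trace = 0 := (isNilpotent_trace_of_isNilpotent ⟨2, by rw [sq, hN]⟩).eq_zero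
  have hdet : N.det = 0 := mul_self_eq_zero.mp (by simp [← det_mul, hN])
  rw [trace_fin_two] at htr
  rw [det_fin_two] at hdet ⊢
  simp only [add_apply, smul_apply, one_apply_eq, one_apply_ne, smul_eq_mul, mul_one, mul_zero,
    zero_add, ne_eq, zero_ne_one, one_ne_zero, not_false_eq_true]
  linear_combination (a * b) * htr + b ^ 2 * hdet

end Matrix

theorem CharTwo.sub_one_mul_self_eq_zero {R : Type*} [Ring R] [CharP R 2] {a : R}
    (ha : a * a = 1) : (a - 1) * (a - 1) = 0 := by
  rw [CharTwo.sub_eq_add, add_mul, mul_add, ha, mul_one, one_mul, add_assoc, ← add_assoc a,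
    CharTwo.add_self_eq_zero, zero_add, CharTwo.add_self_eq_zero]

namespace Matrix.SpecialLinearGroup

section

variable {R : Type*} [CommRing R] [IsDomain R] {N : Matrix (Fin 2) (Fin 2) R}

def unipotentHom (hN : N * N = 0) : Multiplicative R →* SpecialLinearGroup (Fin 2) R where
  toFun t := ⟨1 + t.toAdd • N, by
    simpa using det_smul_one_add_smul_of_mul_self_eq_zero hN 1 t.toAdd⟩
  map_one' := Subtype.ext (by simp)
  map_mul' s t := by
    refine Subtype.ext ?_
    change 1 + (s.toAdd + t.toAdd) • N = (1 + s.toAdd • N) * (1 + t.toAdd • N)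
    rw [mul_add, add_mul, add_mul, smul_mul_smul_comm, hN, smul_zero, add_zero, mul_one, one_mul,
      mul_one, add_smul, add_assoc]

@[simp]
theorem coe_unipotentHom (hN : N * N = 0) (t : Multiplicative R) :
    (unipotentHom hN t : Matrix (Fin 2) (Fin 2) R) = 1 + t.toAdd • N := rfl

theorem unipotentHom_injective (hN : N * N = 0) (hN0 : N ≠ 0) :
    Function.Injective (unipotentHom hN) := by
  intro s t hst
  have h := congrArg (fun B : SpecialLinearGroup (Fin 2) R => (B : Matrix (Fin 2) (Fin 2) R)) hst
  simp only [coe_unipotentHom, add_right_inj] at h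
  exact Multiplicative.toAdd.injective (smul_left_injective R hN0 h)

end

theorem range_unipotentHom_eq_centralizer {K : Type*} [Field K] [CharP K 2]
    {N : Matrix (Fin 2) (Fin 2) K} (hN : N * N = 0) (hN0 : N ≠ 0)
    {A : SpecialLinearGroup (Fin 2) K} (hA : (A : Matrix (Fin 2) (Fin 2) K) = 1 + N) :
    (unipotentHom hN).range = Subgroup.centralizer {A} := by
  ext B
  have hcomm : B ∈ Subgroup.centralizer {A} ↔ Commute (B : Matrix (Fin 2) (Fin 2) K) N := by
    rw [Subgroup.mem_centralizer_singleton_iff, SpecialLinearGroup.ext_iff, Matrix.ext_iff,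
      coe_mul, coe_mul, hA, Commute, SemiconjBy, mul_add, add_mul, mul_one, one_mul, add_right_inj,
      eq_comm]
  rw [MonoidHom.mem_range, hcomm]
  constructor
  · rintro ⟨t, rfl⟩
    simpa using (Commute.one_left N).add_left ((Commute.refl N).smul_left t.toAdd)
  · intro hBN
    obtain ⟨a, b, hB⟩ := exists_eq_smul_one_add_smul_of_commute hN hN0 hBN
    have ha : a = 1 := by
      have hdet := B.prop
      rw [hB, det_smul_one_add_smul_of_mul_self_eq_zero hN] at hdet
      exact CharTwo.sq_injective (hdet.trans (one_pow 2).symm)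
    exact ⟨Multiplicative.ofAdd b, Subtype.ext (by simp [hB, ha])⟩

end Matrix.SpecialLinearGroup

open Matrix.SpecialLinearGroup in
theorem sl2_char_two_centralizer_of_involution_general (e : ℕ)
    (F : Type*) [Field F] [Fintype F] (hF : Fintype.card F = 2 ^ e)
    (A : Matrix.SpecialLinearGroup (Fin 2) F) (hA : orderOf A = 2) :
    Nat.card (Subgroup.centralizer {A}) = 2 ^ e ∧
    (∀ x ∈ Subgroup.centralizer {A}, ∀ y ∈ Subgroup.centralizer {A}, x * y = y * x) ∧
    (∀ x ∈ Subgroup.centralizer {A}, x ^ 2 = 1) := by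
  have : Fact (Nat.Prime 2) := ⟨Nat.prime_two⟩
  have : CharP F 2 := charP_of_card_eq_prime_pow hF
  set N := (A : Matrix (Fin 2) (Fin 2) F) - 1 with hNA
  have hN : N * N = 0 := by
    have hA2 := pow_orderOf_eq_one A
    rw [hA] at hA2
    exact CharTwo.sub_one_mul_self_eq_zero (by rw [← coe_mul, ← sq, hA2, coe_one])
  have hN0 : N ≠ 0 := by
    rw [hNA, sub_ne_zero, ← coe_one]
    intro h
    simp [Subtype.coe_injective h] at hA
  rw [← range_unipotentHom_eq_centralizer hN hN0 (add_sub_cancel _ _).symm]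
  refine ⟨?_, ?_, ?_⟩
  · rw [← Nat.card_congr (MonoidHom.ofInjective (unipotentHom_injective hN hN0)).toEquiv,
      Nat.card_congr Multiplicative.toAdd, Nat.card_eq_fintype_card, hF]
  · rintro _ ⟨s, rfl⟩ _ ⟨t, rfl⟩
    rw [← map_mul, ← map_mul, mul_comm]
  · rintro _ ⟨t, rfl⟩
    rw [← map_pow, sq, show t * t = 1 from CharTwo.add_self_eq_zero t.toAdd, map_one]

/-- Let `q = 2^e` with `e ≥ 2`. The centralizer in `SL₂(F_q)` of any involution is an
elementary abelian `2`-group of order `q`. -/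
theorem sl2_char_two_centralizer_of_involution (e : ℕ) (he : 2 ≤ e)
    (F : Type*) [Field F] [Fintype F] (hF : Fintype.card F = 2 ^ e)
    (A : Matrix.SpecialLinearGroup (Fin 2) F) (hA : orderOf A = 2) :
    Nat.card (Subgroup.centralizer {A}) = 2 ^ e ∧
    (∀ x ∈ Subgroup.centralizer {A}, ∀ y ∈ Subgroup.centralizer {A}, x * y = y * x) ∧
    (∀ x ∈ Subgroup.centralizer {A}, x ^ 2 = 1) :=
  sl2_char_two_centralizer_of_involution_general e F hF A hA
end

section
/- Let p be a prime not dividing n, let d be the multiplicative order of p modulo n, and consider the n-th cyclotomic polynomial Φ_n reduced modulo p. Then Φ_n mod p factors over F_p into exactly φ(n)/d distinct monic irreducible polynomials, each of degree d. -/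
open Polynomial UniqueFactorizationMonoid

/-- Every monic irreducible factor of the cyclotomic polynomial mod `p` has
degree the order of `p` mod `n`. -/
lemma cyclo_factor_natDegree (p n d : ℕ) (hp : p.Prime) (hn : 0 < n)
    (hpn : ¬ p ∣ n) (hd : orderOf ((p : ZMod n)) = d)
    (f : Polynomial (ZMod p)) (hirr : Irreducible f)
    (hdvd : f ∣ Polynomial.cyclotomic n (ZMod p)) : f.natDegree = d := by
  haveI : Fact p.Prime := ⟨hp⟩
  haveI : NeZero n := ⟨hn.ne'⟩
  -- `d` is positive
  have hd0 : 0 < d := by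
    subst hd
    have hcop : Nat.Coprime p n := (Nat.Prime.coprime_iff_not_dvd hp).2 hpn
    have := orderOf_units (y := ZMod.unitOfCoprime p hcop)
    rw [ZMod.coe_unitOfCoprime] at this
    rw [this]
    exact orderOf_pos _
  haveI : Fact (Irreducible f) := ⟨hirr⟩
  set L := AdjoinRoot f
  set μ : L := AdjoinRoot.root f
  have hf0 : f ≠ 0 := hirr.ne_zero
  -- char of `L` is `p`
  haveI : CharP L p := charP_of_injective_algebraMap (algebraMap (ZMod p) L).injective p
  haveI : NeZero (n : L) := ⟨by
    rw [Ne, CharP.cast_eq_zero_iff L p n]; exact hpn⟩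
  -- μ is a primitive n-th root of unity
  have hroot : IsRoot (Polynomial.cyclotomic n L) μ := by
    obtain ⟨c, hc⟩ := hdvd
    have : Polynomial.cyclotomic n L = (f.map (algebraMap (ZMod p) L)) *
        (c.map (algebraMap (ZMod p) L)) := by
      rw [← Polynomial.map_mul, ← hc, Polynomial.map_cyclotomic]
    have h0 : Polynomial.eval μ (f.map (algebraMap (ZMod p) L)) = 0 := AdjoinRoot.isRoot_root f
    rw [this]
    simp [Polynomial.IsRoot, h0]
  have hμ : IsPrimitiveRoot μ n := (Polynomial.isRoot_cyclotomic_iff).1 hroot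
  -- finiteness of L
  set m := f.natDegree with hm
  have hm0 : 0 < m := hirr.natDegree_pos
  let pb := AdjoinRoot.powerBasis hf0
  haveI : Fintype L := Module.fintypeOfFintype pb.basis
  have hcard : Fintype.card L = p ^ m := by
    rw [Module.card_eq_pow_finrank (K := ZMod p) (V := L), ZMod.card, pb.finrank,
      AdjoinRoot.powerBasis_dim]
  -- first, d ∣ m
  have hdm : d ∣ m := by
    have h1 : μ ^ p ^ m = μ := by rw [← hcard]; exact FiniteField.pow_card μ
    have hμ0 : μ ≠ 0 := hμ.ne_zero hn.ne'
    have h2 : μ ^ (p ^ m - 1) = 1 := by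
      have hpm : 1 ≤ p ^ m := Nat.one_le_pow _ _ hp.pos
      have := h1
      rw [← Nat.sub_add_cancel hpm, pow_succ] at this
      exact mul_right_cancel₀ hμ0 (by simpa using this)
    have h3 : n ∣ p ^ m - 1 := hμ.dvd_of_pow_eq_one _ h2
    have h4 : ((p : ZMod n)) ^ m = 1 := by
      have hpm : 1 ≤ p ^ m := Nat.one_le_pow _ _ hp.pos
      obtain ⟨c, hc⟩ := h3
      have hpm' : p ^ m = n * c + 1 := by omega
      have : ((p ^ m : ℕ) : ZMod n) = 1 := by
        rw [hpm']; push_cast; simp [ZMod.natCast_self]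
      push_cast at this
      exact this
    exact hd ▸ orderOf_dvd_of_pow_eq_one h4
  -- second, m ≤ d : every element of L satisfies x ^ p ^ d = x
  have hmd : m ≤ d := by
    have hfix : ∀ x : L, x ^ p ^ d = x := by
      have hμfix : μ ^ p ^ d = μ := by
        have h1 : ((p : ZMod n)) ^ d = 1 := hd ▸ pow_orderOf_eq_one _
        have h2 : ((p ^ d : ℕ) : ZMod n) = ((1 : ℕ) : ZMod n) := by push_cast; simpa using h1
        have h3 : p ^ d % n = 1 % n := (ZMod.natCast_eq_natCast_iff _ _ _).1 h2
        have hpd : 1 ≤ p ^ d := Nat.one_le_pow _ _ hp.pos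
        have h4 : n ∣ p ^ d - 1 := by
          have := (Nat.modEq_iff_dvd' hpd).1 h3.symm
          exact this
        obtain ⟨c, hc⟩ := h4
        have : p ^ d = n * c + 1 := by omega
        rw [this, pow_add, pow_mul, hμ.pow_eq_one, one_pow, pow_one, one_mul]
      -- build the algebra hom x ↦ x ^ p ^ d
      let ψ : L →ₐ[ZMod p] L :=
        { toRingHom := iterateFrobenius L p d
          commutes' := fun r => by
            show iterateFrobenius L p d (algebraMap (ZMod p) L r) = algebraMap (ZMod p) L r
            rw [iterateFrobenius_def, ← map_pow, ZMod.pow_card_pow] }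
      have hψ : ψ = AlgHom.id (ZMod p) L := by
        apply AdjoinRoot.algHom_ext
        show (AdjoinRoot.root f) ^ p ^ d = AdjoinRoot.root f
        exact hμfix
      intro x
      have := congrArg (fun g => g x) hψ
      simpa [ψ, iterateFrobenius_def] using this
    -- count roots of X ^ p ^ d - X
    have hq0 : (X ^ p ^ d - X : L[X]) ≠ 0 :=
      FiniteField.X_pow_card_pow_sub_X_ne_zero L hd0.ne' hp.one_lt
    have hdeg : (X ^ p ^ d - X : L[X]).natDegree = p ^ d :=
      FiniteField.X_pow_card_pow_sub_X_natDegree_eq L hd0.ne' hp.one_lt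
    have hsub : (Finset.univ : Finset L) ⊆ (X ^ p ^ d - X : L[X]).roots.toFinset := by
      intro x _
      rw [Multiset.mem_toFinset, mem_roots hq0]
      simp [hfix x]
    have h1 : Fintype.card L ≤ Multiset.card (X ^ p ^ d - X : L[X]).roots :=
      le_trans (Finset.card_le_card hsub) (Multiset.toFinset_card_le _)
    have h2 : Multiset.card (X ^ p ^ d - X : L[X]).roots ≤ p ^ d :=
      le_trans (X ^ p ^ d - X : L[X]).card_roots' (le_of_eq hdeg)
    have : p ^ m ≤ p ^ d := hcard ▸ le_trans h1 h2
    exact (Nat.pow_le_pow_iff_right hp.one_lt).1 this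
  exact le_antisymm hmd (Nat.le_of_dvd hm0 hdm)

/-- Let `p` be a prime not dividing `n`, let `d` be the multiplicative order of `p`
modulo `n`. Then the `n`-th cyclotomic polynomial reduced mod `p` factors over `F_p`
into exactly `φ(n)/d` distinct monic irreducible polynomials, each of degree `d`. -/
theorem cyclotomic_factorization_mod_p (p n d : ℕ) (hp : p.Prime) (hn : 0 < n)
    (hpn : ¬ p ∣ n) (hd : orderOf ((p : ZMod n)) = d) :
    ∃ S : Finset (Polynomial (ZMod p)),
      S.card = Nat.totient n / d ∧
      (∀ f ∈ S, f.Monic ∧ Irreducible f ∧ f.natDegree = d) ∧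
      S.prod id = Polynomial.cyclotomic n (ZMod p) := by
  haveI : Fact p.Prime := ⟨hp⟩
  set Φ := Polynomial.cyclotomic n (ZMod p) with hΦ
  have hΦ0 : Φ ≠ 0 := Polynomial.cyclotomic_ne_zero n _
  have hΦmonic : Φ.Monic := Polynomial.cyclotomic.monic n _
  -- squarefree
  haveI : NeZero (n : ZMod p) := ⟨by
    rw [Ne, ZMod.natCast_eq_zero_iff]; exact hpn⟩
  have hsqf : Squarefree Φ := by
    have hsep : (X ^ n - 1 : (ZMod p)[X]).Separable :=
      Polynomial.X_pow_sub_one_separable_iff.2 (NeZero.ne _)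
    exact hsep.squarefree.squarefree_of_dvd (Polynomial.cyclotomic.dvd_X_pow_sub_one n _)
  have hnodup : (normalizedFactors Φ).Nodup :=
    (squarefree_iff_nodup_normalizedFactors hΦ0).1 hsqf
  have hdeg : ∀ f ∈ normalizedFactors Φ, f.Monic ∧ Irreducible f ∧ f.natDegree = d := by
    intro f hfmem
    have hirr : Irreducible f := irreducible_of_normalized_factor f hfmem
    have hmon : f.Monic := by
      have := normalize_normalized_factor f hfmem
      rw [← this]
      exact Polynomial.monic_normalize hirr.ne_zero
    exact ⟨hmon, hirr, cyclo_factor_natDegree p n d hp hn hpn hd f hirr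
      (dvd_of_mem_normalizedFactors hfmem)⟩
  have hprod : (normalizedFactors Φ).prod = Φ := by
    have h1 := prod_normalizedFactors hΦ0
    have h2 : (normalizedFactors Φ).prod.Monic := by
      have := Polynomial.monic_multiset_prod_of_monic (normalizedFactors Φ) id
        (fun g hg => (hdeg g hg).1)
      simpa using this
    exact Polynomial.eq_of_monic_of_associated h2 hΦmonic h1
  have hd0 : 0 < d := by
    subst hd
    have hcop : Nat.Coprime p n := (Nat.Prime.coprime_iff_not_dvd hp).2 hpn
    haveI : NeZero n := ⟨hn.ne'⟩
    have := orderOf_units (y := ZMod.unitOfCoprime p hcop)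
    rw [ZMod.coe_unitOfCoprime] at this
    rw [this]
    exact orderOf_pos _
  refine ⟨⟨normalizedFactors Φ, hnodup⟩, ?_, ?_, ?_⟩
  · -- card
    have h1 : Φ.natDegree = Multiset.card (normalizedFactors Φ) * d := by
      conv_lhs => rw [← hprod]
      rw [Polynomial.natDegree_multiset_prod_of_monic _ (fun g hg => (hdeg g hg).1)]
      rw [Multiset.map_congr rfl (fun g hg => (hdeg g hg).2.2)]
      simp [Multiset.map_const', mul_comm]
    have h2 : Nat.totient n = Multiset.card (normalizedFactors Φ) * d := by
      rw [← Polynomial.natDegree_cyclotomic n (ZMod p)]; exact h1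
    show Multiset.card (normalizedFactors Φ) = Nat.totient n / d
    rw [h2, Nat.mul_div_cancel _ hd0]
  · intro f hf
    exact hdeg f hf
  · -- product
    show ((normalizedFactors Φ).map id).prod = Φ
    rw [Multiset.map_id]
    exact hprod
end
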